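/- arXiv:1907.03664 — 9 statements merged into one kernel-verified Lean document; each statement's English description precedes it below -/
import Mathlib

section
/- Let ρ and ρ' be positive semidefinite complex matrices indexed by Fin d₁ × Fin d₂. Then puri-rank(ρ + ρ') ≤ puri-rank(ρ) + puri-rank(ρ'). -/
open Matrix Kronecker
open scoped BigOperators ComplexOrder

/-!
Place two purifications side by side: pad the factors of the first with zero columns on the
right and those of the second with zero columns on the left. The cross terms of the Gram product
then vanish, so the `r + r'` padded Kronecker terms purify `ρ + ρ'`. Purifications exist since
`ρ = B * Bᴴ` and every `B` is a sum of Kronecker products of matrix units with blocks of `B`; hence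
the infimum defining `puriRank` is attained.
-/

/-- Purification rank of a bipartite psd matrix: the least number of Kronecker terms of a
matrix `L` with `L * Lᴴ = ρ`. -/
noncomputable def puriRank {d₁ d₂ : ℕ}
    (ρ : Matrix (Fin d₁ × Fin d₂) (Fin d₁ × Fin d₂) ℂ) : ℕ :=
  sInf {r : ℕ | ∃ (d₁' d₂' : ℕ) (L₁ : Fin r → Matrix (Fin d₁) (Fin d₁') ℂ)
    (L₂ : Fin r → Matrix (Fin d₂) (Fin d₂') ℂ),
    (∑ k, L₁ k ⊗ₖ L₂ k) * (∑ k, L₁ k ⊗ₖ L₂ k)ᴴ = ρ}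

namespace Matrix

variable {R ι κ m₁ m₂ n₁ n₂ : Type*}

theorem sum_single_kronecker_eq [Semiring R] [Fintype m₁] [Fintype n₁] [DecidableEq m₁]
    [DecidableEq n₁] (M : Matrix (m₁ × m₂) (n₁ × n₂) R) :
    ∑ p : m₁ × n₁, single p.1 p.2 (1 : R) ⊗ₖ of (fun b q => M (p.1, b) (p.2, q)) = M := by
  ext ⟨a, b⟩ ⟨c, d⟩
  simp [Matrix.sum_apply, single_apply, ite_and, Fintype.sum_prod_type]

theorem kronecker_sum_sumElim_fromCols_mul_conjTranspose [Semiring R] [StarRing R]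
    [Fintype ι] [Fintype κ] {a₁ a₂ b₁ b₂ : Type*} [Fintype a₁] [Fintype a₂] [Fintype b₁]
    [Fintype b₂]
    (L₁ : ι → Matrix m₁ a₁ R) (L₂ : ι → Matrix m₂ a₂ R)
    (M₁ : κ → Matrix m₁ b₁ R) (M₂ : κ → Matrix m₂ b₂ R) :
    (∑ k, Sum.elim (fun i => fromCols (L₁ i) 0) (fun j => fromCols 0 (M₁ j)) k ⊗ₖ
        Sum.elim (fun i => fromCols (L₂ i) 0) (fun j => fromCols 0 (M₂ j)) k) *
      (∑ k, Sum.elim (fun i => fromCols (L₁ i) 0) (fun j => fromCols 0 (M₁ j)) k ⊗ₖ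
        Sum.elim (fun i => fromCols (L₂ i) 0) (fun j => fromCols 0 (M₂ j)) k)ᴴ =
      (∑ i, L₁ i ⊗ₖ L₂ i) * (∑ i, L₁ i ⊗ₖ L₂ i)ᴴ +
        (∑ j, M₁ j ⊗ₖ M₂ j) * (∑ j, M₁ j ⊗ₖ M₂ j)ᴴ := by
  ext x y
  simp [mul_apply, Matrix.sum_apply, Fintype.sum_prod_type, Fintype.sum_sum_type]

end Matrix

section Purification

variable {d₁ d₂ : ℕ} {ι n₁ n₂ : Type*} [Fintype ι] [Fintype n₁] [Fintype n₂]

def HasPurification (ρ : Matrix (Fin d₁ × Fin d₂) (Fin d₁ × Fin d₂) ℂ) (r : ℕ) : Prop :=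
  ∃ (d₁' d₂' : ℕ) (L₁ : Fin r → Matrix (Fin d₁) (Fin d₁') ℂ)
    (L₂ : Fin r → Matrix (Fin d₂) (Fin d₂') ℂ),
    (∑ k, L₁ k ⊗ₖ L₂ k) * (∑ k, L₁ k ⊗ₖ L₂ k)ᴴ = ρ

theorem hasPurification_of_kronecker_sum {ρ : Matrix (Fin d₁ × Fin d₂) (Fin d₁ × Fin d₂) ℂ}
    (L₁ : ι → Matrix (Fin d₁) n₁ ℂ) (L₂ : ι → Matrix (Fin d₂) n₂ ℂ)
    (h : (∑ k, L₁ k ⊗ₖ L₂ k) * (∑ k, L₁ k ⊗ₖ L₂ k)ᴴ = ρ) :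
    HasPurification ρ (Fintype.card ι) := by
  let eι := Fintype.equivFin ι
  let e₁ := Fintype.equivFin n₁
  let e₂ := Fintype.equivFin n₂
  refine ⟨Fintype.card n₁, Fintype.card n₂, fun k => (L₁ (eι.symm k)).submatrix id e₁.symm,
    fun k => (L₂ (eι.symm k)).submatrix id e₂.symm, ?_⟩
  rw [← h, ← eι.symm.sum_comp]
  ext x y
  simp only [mul_apply, conjTranspose_apply, Matrix.sum_apply, kroneckerMap_apply,
    submatrix_apply, id_eq]
  exact Fintype.sum_equiv (e₁.prodCongr e₂).symm _ _ fun _ => rfl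

theorem Matrix.PosSemidef.hasPurification {ρ : Matrix (Fin d₁ × Fin d₂) (Fin d₁ × Fin d₂) ℂ}
    (hρ : ρ.PosSemidef) : HasPurification ρ (d₁ * d₁) := by
  open scoped MatrixOrder in
  obtain ⟨B, rfl⟩ := CStarAlgebra.nonneg_iff_eq_star_mul_self.mp hρ.nonneg
  have h := hasPurification_of_kronecker_sum _ _
    (congrArg (fun L => L * Lᴴ) (sum_single_kronecker_eq Bᴴ))
  simpa [star_eq_conjTranspose] using h

theorem HasPurification.add {ρ ρ' : Matrix (Fin d₁ × Fin d₂) (Fin d₁ × Fin d₂) ℂ} {r r' : ℕ}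
    (h : HasPurification ρ r) (h' : HasPurification ρ' r') : HasPurification (ρ + ρ') (r + r') := by
  obtain ⟨_, _, L₁, L₂, rfl⟩ := h
  obtain ⟨_, _, M₁, M₂, rfl⟩ := h'
  simpa using hasPurification_of_kronecker_sum _ _
    (kronecker_sum_sumElim_fromCols_mul_conjTranspose L₁ L₂ M₁ M₂)

theorem puriRank_eq_sInf (ρ : Matrix (Fin d₁ × Fin d₂) (Fin d₁ × Fin d₂) ℂ) :
    puriRank ρ = sInf {r | HasPurification ρ r} :=
  rfl

theorem puriRank_le {ρ : Matrix (Fin d₁ × Fin d₂) (Fin d₁ × Fin d₂) ℂ} {r : ℕ}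
    (h : HasPurification ρ r) : puriRank ρ ≤ r :=
  puriRank_eq_sInf ρ ▸ Nat.sInf_le h

theorem Matrix.PosSemidef.hasPurification_puriRank
    {ρ : Matrix (Fin d₁ × Fin d₂) (Fin d₁ × Fin d₂) ℂ} (hρ : ρ.PosSemidef) :
    HasPurification ρ (puriRank ρ) :=
  puriRank_eq_sInf ρ ▸ Nat.sInf_mem (s := {r | HasPurification ρ r}) ⟨_, hρ.hasPurification⟩

end Purification

theorem puriRank_add_le {d₁ d₂ : ℕ}
    (ρ ρ' : Matrix (Fin d₁ × Fin d₂) (Fin d₁ × Fin d₂) ℂ)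
    (hρ : ρ.PosSemidef) (hρ' : ρ'.PosSemidef) :
    puriRank (ρ + ρ') ≤ puriRank ρ + puriRank ρ' :=
  puriRank_le (hρ.hasPurification_puriRank.add hρ'.hasPurification_puriRank)
end

section
/- Let ρ : Matrix (Fin d × Fin d) (Fin d × Fin d) ℂ be positive semidefinite and swap-invariant, i.e. ρ (i₁,i₂) (j₁,j₂) = ρ (i₂,i₁) (j₂,j₁) for all indices. Then (a) there exist r ∈ ℕ and matrices A k : Matrix (Fin d) (Fin d) ℂ (k < r) with ρ = Σ_{k<r} A k ⊗ₖ A k; and (b) there exist r, d' ∈ ℕ and matrices C k : Matrix (Fin d) (Fin d') ℂ (k < r) such that, setting L = Σ_{k<r} C k ⊗ₖ C k, one has L * Lᴴ = ρ. -/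
/-!
Swap invariance says that `ρ` is a symmetric tensor in `M_d ⊗ M_d`. Symmetric tensors are spanned
by the squares `X ⊗ X`, by polarization `X ⊗ Y + Y ⊗ X = (X + Y) ⊗ (X + Y) - X ⊗ X - Y ⊗ Y`, and
over `ℂ` every coefficient is a square, `c • X ⊗ X = (√c • X) ⊗ (√c • X)`; this gives (a).
For (b), conjugating by the swap turns `√ρ` into a positive square root of the swapped `ρ`, which
is `ρ` itself, so by uniqueness of positive square roots `√ρ` is swap invariant too. A symmetric
decomposition `L` of `√ρ` then satisfies `L * Lᴴ = √ρ * √ρ = ρ`.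
-/

open Matrix Kronecker
open scoped BigOperators ComplexOrder MatrixOrder

namespace Matrix

section SymmetricDecomposition

variable {K m n : Type*} [Field K]

theorem kronecker_add_kronecker_mem_span_kronecker_self (X Y : Matrix m n K) :
    X ⊗ₖ Y + Y ⊗ₖ X ∈ Submodule.span K (Set.range fun Z : Matrix m n K => Z ⊗ₖ Z) := by
  have polarization : X ⊗ₖ Y + Y ⊗ₖ X = (X + Y) ⊗ₖ (X + Y) - X ⊗ₖ X - Y ⊗ₖ Y := by
    simp only [add_kronecker, kronecker_add]
    abel
  rw [polarization]
  refine sub_mem (sub_mem ?_ ?_) ?_ <;> exact Submodule.subset_span ⟨_, rfl⟩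

theorem eq_sum_smul_single_kronecker_single [Fintype m] [Fintype n] [DecidableEq m]
    [DecidableEq n] (L : Matrix (m × m) (n × n) K) :
    L = ∑ p : m × n, ∑ q : m × n,
      L (p.1, q.1) (p.2, q.2) • (single p.1 p.2 (1 : K) ⊗ₖ single q.1 q.2 1) := by
  ext ⟨i₁, i₂⟩ ⟨j₁, j₂⟩
  simp [sum_apply, single_apply, Fintype.sum_prod_type, ite_and]

theorem mem_span_kronecker_self_of_swap [Fintype m] [Fintype n] [DecidableEq m] [DecidableEq n]
    [NeZero (2 : K)] (L : Matrix (m × m) (n × n) K)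
    (hswap : ∀ i₁ i₂ j₁ j₂, L (i₁, i₂) (j₁, j₂) = L (i₂, i₁) (j₂, j₁)) :
    L ∈ Submodule.span K (Set.range fun Z : Matrix m n K => Z ⊗ₖ Z) := by
  set E : m × n → Matrix m n K := fun p => single p.1 p.2 1
  set c : m × n → m × n → K := fun p q => L (p.1, q.1) (p.2, q.2)
  have hL : L = ∑ p, ∑ q, c p q • (E p ⊗ₖ E q) := eq_sum_smul_single_kronecker_single L
  have hL_swap : L = ∑ p, ∑ q, c p q • (E q ⊗ₖ E p) := by
    rw [Finset.sum_comm]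
    conv_lhs => rw [hL]
    refine Finset.sum_congr rfl fun p _ => Finset.sum_congr rfl fun q _ => ?_
    rw [show c p q = c q p from hswap _ _ _ _]
  have h2L : (2 : K) • L = ∑ p, ∑ q, c p q • (E p ⊗ₖ E q + E q ⊗ₖ E p) := by
    simp only [smul_add, Finset.sum_add_distrib, two_smul]
    exact congrArg₂ (· + ·) hL hL_swap
  rw [← inv_smul_smul₀ (two_ne_zero (α := K)) L, h2L]
  exact Submodule.smul_mem _ _ <| Submodule.sum_mem _ fun p _ => Submodule.sum_mem _ fun q _ =>
    Submodule.smul_mem _ _ (kronecker_add_kronecker_mem_span_kronecker_self _ _)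

theorem exists_sum_kronecker_self_of_mem_span [IsAlgClosed K] {L : Matrix (m × m) (n × n) K}
    (hL : L ∈ Submodule.span K (Set.range fun Z : Matrix m n K => Z ⊗ₖ Z)) :
    ∃ (r : ℕ) (A : Fin r → Matrix m n K), L = ∑ k, A k ⊗ₖ A k := by
  obtain ⟨r, a, X, rfl⟩ := Submodule.mem_span_set'.mp hL
  choose Y hY using fun k => (X k).2
  choose s hs using fun k => IsAlgClosed.exists_pow_nat_eq (a k) two_pos
  refine ⟨r, fun k => s k • Y k, Finset.sum_congr rfl fun k _ => ?_⟩
  rw [smul_kronecker, kronecker_smul, smul_smul, ← sq, hs, ← hY]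

theorem exists_sum_kronecker_self_of_swap [Fintype m] [Fintype n] [DecidableEq m]
    [DecidableEq n] [IsAlgClosed K] [NeZero (2 : K)] (L : Matrix (m × m) (n × n) K)
    (hswap : ∀ i₁ i₂ j₁ j₂, L (i₁, i₂) (j₁, j₂) = L (i₂, i₁) (j₂, j₁)) :
    ∃ (r : ℕ) (A : Fin r → Matrix m n K), L = ∑ k, A k ⊗ₖ A k :=
  exists_sum_kronecker_self_of_mem_span (mem_span_kronecker_self_of_swap L hswap)

end SymmetricDecomposition

section SquareRoot

variable {𝕜 m n : Type*} [RCLike 𝕜] [Fintype m] [Fintype n] [DecidableEq m] [DecidableEq n]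

theorem cfcSqrt_submatrix_equiv {A : Matrix n n 𝕜} (hA : A.PosSemidef) (e : m ≃ n) :
    CFC.sqrt (A.submatrix e e) = (CFC.sqrt A).submatrix e e := by
  have hB : (CFC.sqrt A).PosSemidef := nonneg_iff_posSemidef.mp (CFC.sqrt_nonneg A)
  refine CFC.sqrt_unique ?_ (hB.submatrix e).nonneg
  rw [submatrix_mul_equiv, CFC.sqrt_mul_sqrt_self A hA.nonneg]

theorem cfcSqrt_apply_swap {A : Matrix (n × n) (n × n) 𝕜} (hA : A.PosSemidef)
    (hswap : ∀ i₁ i₂ j₁ j₂, A (i₁, i₂) (j₁, j₂) = A (i₂, i₁) (j₂, j₁)) (i₁ i₂ j₁ j₂ : n) :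
    CFC.sqrt A (i₁, i₂) (j₁, j₂) = CFC.sqrt A (i₂, i₁) (j₂, j₁) := by
  have hA_swap : A.submatrix Prod.swap Prod.swap = A := by
    ext ⟨i₁, i₂⟩ ⟨j₁, j₂⟩
    exact (hswap i₁ i₂ j₁ j₂).symm
  have h := cfcSqrt_submatrix_equiv hA (Equiv.prodComm n n)
  simp only [Equiv.coe_prodComm, hA_swap] at h
  exact congrFun₂ h (i₁, i₂) (j₁, j₂)

end SquareRoot

end Matrix

/-- Every positive semidefinite swap-invariant bipartite matrix admits a symmetric
operator Schmidt decomposition and a symmetric local purification. -/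
theorem symmetric_decomposition_and_purification_of_swap_invariant {d : ℕ}
    (ρ : Matrix (Fin d × Fin d) (Fin d × Fin d) ℂ) (hρ : ρ.PosSemidef)
    (hswap : ∀ i₁ i₂ j₁ j₂ : Fin d, ρ (i₁, i₂) (j₁, j₂) = ρ (i₂, i₁) (j₂, j₁)) :
    (∃ (r : ℕ) (A : Fin r → Matrix (Fin d) (Fin d) ℂ), ρ = ∑ k, A k ⊗ₖ A k) ∧
    (∃ (r d' : ℕ) (C : Fin r → Matrix (Fin d) (Fin d') ℂ),
      (∑ k, C k ⊗ₖ C k) * (∑ k, C k ⊗ₖ C k)ᴴ = ρ) := by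
  refine ⟨exists_sum_kronecker_self_of_swap ρ hswap, ?_⟩
  obtain ⟨r, C, hC⟩ := exists_sum_kronecker_self_of_swap _ (cfcSqrt_apply_swap hρ hswap)
  refine ⟨r, d, C, ?_⟩
  have hsqrt : (CFC.sqrt ρ).IsHermitian :=
    (nonneg_iff_posSemidef.mp (CFC.sqrt_nonneg ρ)).isHermitian
  rw [← hC, hsqrt.eq, CFC.sqrt_mul_sqrt_self ρ hρ.nonneg]
end

section
/- Let M : Matrix (Fin d₁) (Fin d₂) ℝ have all entries nonnegative, and let σ(M) : Matrix (Fin d₁ × Fin d₂) (Fin d₁ × Fin d₂) ℂ be the diagonal matrix with σ(M) (i,j) (i,j) = M i j and all other entries 0. Then the least r ∈ ℕ such that there exist A k : Matrix (Fin d₁) (Fin d₁) ℂ and B k : Matrix (Fin d₂) (Fin d₂) ℂ (k < r) with σ(M) = Σ_{k<r} A k ⊗ₖ B k equals the rank of M (Matrix.rank over ℝ). -/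
/-!
The `(i, j)` diagonal entry of `∑ₖ Aₖ ⊗ₖ Bₖ` is `∑ₖ (Aₖ)ᵢᵢ (Bₖ)ⱼⱼ`, so a decomposition of `σ(M)`
into `r` Kronecker products factors `M` through `ℂ^r`, and `rank M ≤ r` because the rank of a
matrix does not change under a field extension. Conversely, a rank factorization `M = C * D`
through `ℝ^(rank M)` gives `σ(M) = ∑ₖ diagonal (C · k) ⊗ₖ diagonal (D k ·)`.
-/

open Matrix Kronecker
open scoped BigOperators

/-- The diagonal psd matrix associated to a nonnegative matrix `M`. -/
noncomputable def sigmaM {d₁ d₂ : ℕ} (M : Matrix (Fin d₁) (Fin d₂) ℝ) :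
    Matrix (Fin d₁ × Fin d₂) (Fin d₁ × Fin d₂) ℂ :=
  Matrix.diagonal (fun p : Fin d₁ × Fin d₂ => (M p.1 p.2 : ℂ))

namespace Matrix

variable {m n ι K L R : Type*}

theorem exists_rank_factorization [Fintype n] [Field K] [Finite m] (A : Matrix m n K) :
    ∃ (C : Matrix m (Fin A.rank) K) (D : Matrix (Fin A.rank) n K), A = C * D := by
  set V := Submodule.span K (Set.range A.row)
  let b : Module.Basis (Fin A.rank) K V :=
    (Module.finBasis K V).reindex (finCongr A.rank_eq_finrank_span_row.symm)
  have hrow (i : m) : A i ∈ V := Submodule.subset_span ⟨i, rfl⟩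
  refine ⟨of fun i k => b.repr ⟨A i, hrow i⟩ k, of fun k => (b k : n → K), ?_⟩
  ext i j
  have := congrFun (congrArg Subtype.val (b.sum_repr ⟨A i, hrow i⟩)) j
  simp only [Submodule.coe_sum, Submodule.coe_smul, Finset.sum_apply, Pi.smul_apply,
    smul_eq_mul] at this
  simpa [mul_apply] using this.symm

theorem rank_le_rank_map_algebraMap [Fintype n] [Field K] [Field L] [Algebra K L] [Finite m]
    (A : Matrix m n K) : A.rank ≤ (A.map (algebraMap K L)).rank := by
  obtain ⟨κ, a, ha, hspan, hli⟩ := exists_linearIndependent' K A.row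
  have : Finite κ := Finite.of_injective a ha
  have : Fintype κ := Fintype.ofFinite κ
  have hκ : A.rank = Fintype.card κ := by
    rw [A.rank_eq_finrank_span_row, ← hspan, finrank_span_eq_card hli]
  have hliL : LinearIndependent L ((A.map (algebraMap K L)).submatrix a id).row :=
    linearIndependent_algebraMap_comp_iff.mpr hli
  rw [hκ, ← hliL.rank_matrix]
  exact rank_submatrix_le _ _ _

theorem rank_map_algebraMap [Fintype n] [Field K] [Field L] [Algebra K L] [Finite m]
    (A : Matrix m n K) : (A.map (algebraMap K L)).rank = A.rank := by
  refine le_antisymm ?_ A.rank_le_rank_map_algebraMap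
  obtain ⟨C, D, hCD⟩ := A.exists_rank_factorization
  calc (A.map (algebraMap K L)).rank
      = ((C * D).map (algebraMap K L)).rank := by rw [← hCD]
    _ = (C.map (algebraMap K L) * D.map (algebraMap K L)).rank := by rw [Matrix.map_mul]
    _ ≤ A.rank :=
      (rank_mul_le_left _ _).trans ((rank_le_card_width _).trans_eq (Fintype.card_fin _))

theorem sum_diagonal_kronecker_diagonal [CommSemiring R] [Fintype ι] [DecidableEq m]
    [DecidableEq n] (C : Matrix m ι R) (D : Matrix ι n R) :
    ∑ k, diagonal (fun i => C i k) ⊗ₖ diagonal (fun j => D k j) =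
      diagonal (fun p : m × n => (C * D) p.1 p.2) := by
  ext p q
  simp only [diagonal_kronecker_diagonal, sum_apply, diagonal_apply]
  split_ifs <;> simp [mul_apply]

theorem rank_diag_sum_kronecker_le [Fintype n] [Field K] {r : ℕ}
    (A : Fin r → Matrix m m K) (B : Fin r → Matrix n n K) :
    (of fun i j => (∑ k, A k ⊗ₖ B k) (i, j) (i, j)).rank ≤ r := by
  have hfac : (of fun i j => (∑ k, A k ⊗ₖ B k) (i, j) (i, j)) =
      (of fun i k => A k i i) * of fun k j => B k j j := by
    ext i j
    simp [sum_apply, mul_apply]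
  rw [hfac]
  exact (rank_mul_le_left _ _).trans ((rank_le_card_width _).trans_eq (Fintype.card_fin r))

end Matrix

theorem osr_sigmaM_eq_rank_general {d₁ d₂ : ℕ} (M : Matrix (Fin d₁) (Fin d₂) ℝ) :
    sInf {r : ℕ | ∃ (A : Fin r → Matrix (Fin d₁) (Fin d₁) ℂ)
        (B : Fin r → Matrix (Fin d₂) (Fin d₂) ℂ),
        sigmaM M = ∑ k, A k ⊗ₖ B k} = M.rank := by
  have hdiag : (of fun i j => sigmaM M (i, j) (i, j)) = M.map (algebraMap ℝ ℂ) := by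
    ext i j
    simp [sigmaM]
  have hrank : ∃ (A : Fin M.rank → Matrix (Fin d₁) (Fin d₁) ℂ)
      (B : Fin M.rank → Matrix (Fin d₂) (Fin d₂) ℂ), sigmaM M = ∑ k, A k ⊗ₖ B k := by
    obtain ⟨C, D, hCD⟩ := M.exists_rank_factorization
    refine ⟨fun k => diagonal fun i => C.map (algebraMap ℝ ℂ) i k,
      fun k => diagonal fun j => D.map (algebraMap ℝ ℂ) k j, ?_⟩
    rw [sum_diagonal_kronecker_diagonal, ← Matrix.map_mul, ← hCD]
    rfl
  refine le_antisymm (Nat.sInf_le hrank) (le_csInf ⟨_, hrank⟩ ?_)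
  rintro r ⟨A, B, hAB⟩
  rw [← M.rank_map_algebraMap (L := ℂ), ← hdiag, hAB]
  exact rank_diag_sum_kronecker_le A B

/-- The operator Schmidt rank of `σ(M)` equals the rank of `M`. -/
theorem osr_sigmaM_eq_rank {d₁ d₂ : ℕ} (M : Matrix (Fin d₁) (Fin d₂) ℝ)
    (hM : ∀ i j, 0 ≤ M i j) :
    sInf {r : ℕ | ∃ (A : Fin r → Matrix (Fin d₁) (Fin d₁) ℂ)
        (B : Fin r → Matrix (Fin d₂) (Fin d₂) ℂ),
        sigmaM M = ∑ k, A k ⊗ₖ B k} = M.rank :=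
  osr_sigmaM_eq_rank_general M
end

section
/- Let M : Matrix (Fin d₁) (Fin d₂) ℝ have all entries nonnegative, and let σ(M) : Matrix (Fin d₁ × Fin d₂) (Fin d₁ × Fin d₂) ℂ be the diagonal matrix with σ(M) (i,j) (i,j) = M i j and all other entries 0. Then the least r ∈ ℕ such that there exist positive semidefinite A k : Matrix (Fin d₁) (Fin d₁) ℂ and B k : Matrix (Fin d₂) (Fin d₂) ℂ (k < r) with σ(M) = Σ_{k<r} A k ⊗ₖ B k equals the nonnegative rank rank₊(M), i.e. the least r such that M = A * B for some entrywise nonnegative A : Matrix (Fin d₁) (Fin r) ℝ and B : Matrix (Fin r) (Fin d₂) ℝ. -/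
open Matrix Kronecker
open scoped BigOperators ComplexOrder

/-!
Separable decompositions of `σ(M)` and nonnegative factorizations of `M` correspond for every
`r`, so the two sets of admissible `r` coincide. Comparing diagonal entries in
`σ(M) = ∑ₖ Aₖ ⊗ Bₖ` gives `M i j = ∑ₖ (Aₖ)ᵢᵢ (Bₖ)ⱼⱼ`, a nonnegative factorization because psd
matrices have nonnegative real diagonals. Conversely, `M = A * B` yields
`σ(M) = ∑ₖ diag(A·ₖ) ⊗ diag(Bₖ·)`, with diagonal psd factors.
-/

namespace Matrix

variable {m n ι : Type*} [Fintype ι]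

theorem sum_kronecker_apply_self {R : Type*} [CommSemiring R] (A : ι → Matrix m m R)
    (B : ι → Matrix n n R) (i : m) (j : n) :
    (∑ k, A k ⊗ₖ B k) (i, j) (i, j) = ∑ k, A k i i * B k j j := by
  simp only [sum_apply, kroneckerMap_apply]

theorem IsHermitian.ofReal_re_apply_self {A : Matrix m m ℂ} (hA : A.IsHermitian) (i : m) :
    ((A i i).re : ℂ) = A i i :=
  Complex.conj_eq_iff_re.mp (by simpa using congrFun₂ hA i i)

theorem eq_mul_of_diagonal_eq_sum_kronecker [DecidableEq m] [DecidableEq n] {M : Matrix m n ℝ}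
    {A : ι → Matrix m m ℂ} {B : ι → Matrix n n ℂ} (hA : ∀ k, (A k).IsHermitian)
    (hB : ∀ k, (B k).IsHermitian)
    (h : diagonal (fun p : m × n => (M p.1 p.2 : ℂ)) = ∑ k, A k ⊗ₖ B k) :
    M = (of fun i k => (A k i i).re) * (of fun k j => (B k j j).re) := by
  ext i j
  have hij := congrFun₂ h (i, j) (i, j)
  rw [diagonal_apply_eq, sum_kronecker_apply_self] at hij
  apply Complex.ofReal_injective
  simp only [hij, mul_apply, of_apply, Complex.ofReal_sum, Complex.ofReal_mul,
    (hA _).ofReal_re_apply_self, (hB _).ofReal_re_apply_self]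

theorem diagonal_mul_eq_sum_kronecker [DecidableEq m] [DecidableEq n] (A : Matrix m ι ℝ)
    (B : Matrix ι n ℝ) :
    diagonal (fun p : m × n => ((A * B) p.1 p.2 : ℂ)) =
      ∑ k, diagonal (fun i => (A i k : ℂ)) ⊗ₖ diagonal (fun j => (B k j : ℂ)) := by
  ext p q
  simp only [diagonal_kronecker_diagonal, sum_apply, diagonal_apply, mul_apply]
  split_ifs <;> simp

end Matrix

theorem sepDecomposition_iff_nonnegFactorization {d₁ d₂ r : ℕ} (M : Matrix (Fin d₁) (Fin d₂) ℝ) :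
    (∃ (A : Fin r → Matrix (Fin d₁) (Fin d₁) ℂ) (B : Fin r → Matrix (Fin d₂) (Fin d₂) ℂ),
        (∀ k, (A k).PosSemidef) ∧ (∀ k, (B k).PosSemidef) ∧ sigmaM M = ∑ k, A k ⊗ₖ B k) ↔
      ∃ (A : Matrix (Fin d₁) (Fin r) ℝ) (B : Matrix (Fin r) (Fin d₂) ℝ),
        (∀ i k, 0 ≤ A i k) ∧ (∀ k j, 0 ≤ B k j) ∧ M = A * B := by
  constructor
  · rintro ⟨A, B, hA, hB, hsum⟩
    exact ⟨_, _, fun i k => (Complex.nonneg_iff.mp (hA k).diag_nonneg).1,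
      fun k j => (Complex.nonneg_iff.mp (hB k).diag_nonneg).1,
      eq_mul_of_diagonal_eq_sum_kronecker (fun k => (hA k).1) (fun k => (hB k).1) hsum⟩
  · rintro ⟨A, B, hA, hB, rfl⟩
    exact ⟨_, _, fun k => .diagonal fun i => Complex.zero_le_real.mpr (hA i k),
      fun k => .diagonal fun j => Complex.zero_le_real.mpr (hB k j),
      diagonal_mul_eq_sum_kronecker A B⟩

theorem sepRank_sigmaM_eq_nonnegRank_general {d₁ d₂ : ℕ} (M : Matrix (Fin d₁) (Fin d₂) ℝ) :
    sInf {r : ℕ | ∃ (A : Fin r → Matrix (Fin d₁) (Fin d₁) ℂ)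
        (B : Fin r → Matrix (Fin d₂) (Fin d₂) ℂ),
        (∀ k, (A k).PosSemidef) ∧ (∀ k, (B k).PosSemidef) ∧
        sigmaM M = ∑ k, A k ⊗ₖ B k} =
    sInf {r : ℕ | ∃ (A : Matrix (Fin d₁) (Fin r) ℝ) (B : Matrix (Fin r) (Fin d₂) ℝ),
        (∀ i k, 0 ≤ A i k) ∧ (∀ k j, 0 ≤ B k j) ∧ M = A * B} := by
  congr 1
  ext r
  exact sepDecomposition_iff_nonnegFactorization M

/-- The separable rank of `σ(M)` equals the nonnegative rank of `M`. -/
theorem sepRank_sigmaM_eq_nonnegRank {d₁ d₂ : ℕ} (M : Matrix (Fin d₁) (Fin d₂) ℝ)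
    (hM : ∀ i j, 0 ≤ M i j) :
    sInf {r : ℕ | ∃ (A : Fin r → Matrix (Fin d₁) (Fin d₁) ℂ)
        (B : Fin r → Matrix (Fin d₂) (Fin d₂) ℂ),
        (∀ k, (A k).PosSemidef) ∧ (∀ k, (B k).PosSemidef) ∧
        sigmaM M = ∑ k, A k ⊗ₖ B k} =
    sInf {r : ℕ | ∃ (A : Matrix (Fin d₁) (Fin r) ℝ) (B : Matrix (Fin r) (Fin d₂) ℝ),
        (∀ i k, 0 ≤ A i k) ∧ (∀ k j, 0 ≤ B k j) ∧ M = A * B} :=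
  sepRank_sigmaM_eq_nonnegRank_general M
end

section
/- Let M : Matrix (Fin d₁) (Fin d₂) ℝ have all entries nonnegative, and let σ(M) : Matrix (Fin d₁ × Fin d₂) (Fin d₁ × Fin d₂) ℂ be the diagonal matrix with σ(M) (i,j) (i,j) = M i j and all other entries 0. Then the purification rank puri-rank(σ(M)) — the least r such that there exist d₁', d₂' ∈ ℕ and L¹ k : Matrix (Fin d₁) (Fin d₁') ℂ, L² k : Matrix (Fin d₂) (Fin d₂') ℂ (k < r) with L = Σ_{k<r} L¹ k ⊗ₖ L² k satisfying L * Lᴴ = σ(M) — equals the complex positive semidefinite rank psd-rank^ℂ(M), i.e. the least r such that there exist positive semidefinite matrices E i, F j : Matrix (Fin r) (Fin r) ℂ (i : Fin d₁, j : Fin d₂) with (M i j : ℂ) = Matrix.trace (E i * (F j)ᵀ) for all i, j. -/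
/-!
Write `L = ∑ₖ L¹ₖ ⊗ L²ₖ` and let `Gᵢ` be the matrix whose `k`-th row is the `i`-th row of `L¹ₖ`
(similarly `Hⱼ` for `L²`). The `(i, j)` row of `L` is the matrix `Hⱼᵀ Gᵢ` read as a vector, so the
`(i, j)` diagonal entry of `L Lᴴ` is `tr (Hⱼᵀ Gᵢ (Hⱼᵀ Gᵢ)ᴴ) = tr (Eᵢ Fⱼᵀ)` with the psd matrices
`Eᵢ = Gᵢ Gᵢᴴ`, `Fⱼ = Hⱼ Hⱼᴴ`. Conversely, given a psd factorization, write `Eᵢ = Pᵢ Pᵢᴴ`,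
`Fⱼ = Qⱼ Qⱼᴴ` and let `L¹ₖ` carry the `k`-th row of `Pᵢ` in its `i`-th row, inside a column block
reserved for `i` (likewise for `L²`). Then the rows of `L` have disjoint supports, so `L Lᴴ` is
diagonal, and its diagonal is `tr (Eᵢ Fⱼᵀ) = Mᵢⱼ` by the first computation. Hence the two sets of
admissible `r` coincide.
-/

open Matrix Kronecker
open scoped BigOperators ComplexOrder

namespace Matrix

variable {ι m n α β κ R : Type*}

def rowStack (L : ι → Matrix m α R) (i : m) : Matrix ι α R :=
  of fun k a => L k i a

def blockSpread [DecidableEq m] [Zero R] (P : m → Matrix ι κ R) (k : ι) : Matrix m (m × κ) R :=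
  of fun i x => if x.1 = i then P i k x.2 else 0

theorem mul_conjTranspose_apply_eq_zero_of_ne [Fintype α] [NonUnitalSemiring R] [StarRing R]
    {x x' : m} (A : Matrix m α R) (f : α → m) (hA : ∀ x y, f y ≠ x → A x y = 0) (h : x ≠ x') :
    (A * Aᴴ) x x' = 0 := by
  rw [mul_apply]
  refine Finset.sum_eq_zero fun y _ => ?_
  rw [conjTranspose_apply]
  by_cases hy : f y = x
  · rw [hA x' y (hy ▸ h), star_zero, mul_zero]
  · rw [hA x y hy, zero_mul]

theorem rowStack_blockSpread_mul_conjTranspose [Fintype m] [Fintype κ] [DecidableEq m]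
    [Semiring R] [StarRing R] (P : m → Matrix ι κ R) (i : m) :
    rowStack (blockSpread P) i * (rowStack (blockSpread P) i)ᴴ = P i * (P i)ᴴ := by
  ext k k'
  simp [rowStack, blockSpread, mul_apply, Fintype.sum_prod_type]

section KroneckerSum

variable [Fintype ι] [CommSemiring R]

theorem sum_kronecker_apply (L₁ : ι → Matrix m α R) (L₂ : ι → Matrix n β R) (i : m) (j : n)
    (a : α) (b : β) :
    (∑ k, L₁ k ⊗ₖ L₂ k) (i, j) (a, b) = ((rowStack L₂ j)ᵀ * rowStack L₁ i) b a := by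
  simp only [sum_apply, kroneckerMap_apply, mul_apply, transpose_apply, rowStack, of_apply,
    mul_comm]

theorem sum_kronecker_blockSpread_apply_eq_zero [DecidableEq m] [DecidableEq n]
    (P : m → Matrix ι α R) (Q : n → Matrix ι β R) {i : m} {j : n} {x : m × α} {y : n × β}
    (h : (x.1, y.1) ≠ (i, j)) :
    (∑ k, blockSpread P k ⊗ₖ blockSpread Q k : Matrix (m × n) ((m × α) × (n × β)) R)
      (i, j) (x, y) = 0 := by
  rw [sum_apply]
  refine Finset.sum_eq_zero fun k _ => ?_
  obtain hi | hj : x.1 ≠ i ∨ y.1 ≠ j := not_and_or.mp (Prod.ext_iff.not.mp h)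
  · simp [blockSpread, hi]
  · simp [blockSpread, hj]

variable [StarRing R] [Fintype α] [Fintype β]

theorem trace_mul_conjTranspose_mul_transpose_mul_conjTranspose (G : Matrix ι α R)
    (H : Matrix ι β R) :
    trace (G * Gᴴ * (H * Hᴴ)ᵀ) = trace (Hᵀ * G * (Hᵀ * G)ᴴ) := by
  rw [transpose_mul, conjTranspose_mul, conjTranspose_transpose_eq_transpose_conjTranspose,
    ← Matrix.mul_assoc, trace_mul_comm]
  simp only [Matrix.mul_assoc]

theorem sum_kronecker_mul_conjTranspose_apply_self (L₁ : ι → Matrix m α R)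
    (L₂ : ι → Matrix n β R) (i : m) (j : n) :
    ((∑ k, L₁ k ⊗ₖ L₂ k) * (∑ k, L₁ k ⊗ₖ L₂ k)ᴴ) (i, j) (i, j) =
      trace (rowStack L₁ i * (rowStack L₁ i)ᴴ * (rowStack L₂ j * (rowStack L₂ j)ᴴ)ᵀ) := by
  rw [trace_mul_conjTranspose_mul_transpose_mul_conjTranspose, mul_apply, Fintype.sum_prod_type,
    Finset.sum_comm]
  simp only [trace, diag_apply, mul_apply, conjTranspose_apply, sum_kronecker_apply]

theorem exists_fin_sum_kronecker_mul_conjTranspose_eq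
    (L₁ : ι → Matrix m α R) (L₂ : ι → Matrix n β R) :
    ∃ (L₁' : ι → Matrix m (Fin (Fintype.card α)) R) (L₂' : ι → Matrix n (Fin (Fintype.card β)) R),
      (∑ k, L₁' k ⊗ₖ L₂' k) * (∑ k, L₁' k ⊗ₖ L₂' k)ᴴ =
        (∑ k, L₁ k ⊗ₖ L₂ k) * (∑ k, L₁ k ⊗ₖ L₂ k)ᴴ := by
  refine ⟨fun k => (L₁ k).submatrix id (Fintype.equivFin α).symm,
    fun k => (L₂ k).submatrix id (Fintype.equivFin β).symm, ?_⟩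
  ext x y
  simp only [mul_apply, sum_apply, conjTranspose_apply, kroneckerMap_apply, submatrix_apply]
  exact Fintype.sum_equiv ((Fintype.equivFin α).symm.prodCongr (Fintype.equivFin β).symm) _ _
    fun _ => rfl

end KroneckerSum

variable {𝕜 : Type*} [RCLike 𝕜]

theorem PosSemidef.exists_eq_mul_conjTranspose [Fintype n] {A : Matrix n n 𝕜}
    (hA : A.PosSemidef) : ∃ B : Matrix n n 𝕜, A = B * Bᴴ := by
  classical
  open scoped MatrixOrder in
  obtain ⟨B, hB⟩ := CStarAlgebra.nonneg_iff_eq_star_mul_self.mp hA.nonneg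
  exact ⟨Bᴴ, by rw [hB, conjTranspose_conjTranspose, star_eq_conjTranspose]⟩

variable [Fintype ι] [DecidableEq m] [DecidableEq n]

theorem exists_psdFactorization_of_purification [Fintype α] [Fintype β] {A : Matrix m n 𝕜}
    (L₁ : ι → Matrix m α 𝕜) (L₂ : ι → Matrix n β 𝕜)
    (hL : (∑ k, L₁ k ⊗ₖ L₂ k) * (∑ k, L₁ k ⊗ₖ L₂ k)ᴴ = diagonal fun p => A p.1 p.2) :
    ∃ (E : m → Matrix ι ι 𝕜) (F : n → Matrix ι ι 𝕜),
      (∀ i, (E i).PosSemidef) ∧ (∀ j, (F j).PosSemidef) ∧ ∀ i j, A i j = trace (E i * (F j)ᵀ) := by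
  refine ⟨fun i => rowStack L₁ i * (rowStack L₁ i)ᴴ, fun j => rowStack L₂ j * (rowStack L₂ j)ᴴ,
    fun i => posSemidef_self_mul_conjTranspose _, fun j => posSemidef_self_mul_conjTranspose _,
    fun i j => ?_⟩
  rw [← sum_kronecker_mul_conjTranspose_apply_self, hL, diagonal_apply_eq]

theorem exists_purification_of_psdFactorization [Fintype m] [Fintype n]
    {A : Matrix m n 𝕜} {E : m → Matrix ι ι 𝕜} {F : n → Matrix ι ι 𝕜}
    (hE : ∀ i, (E i).PosSemidef) (hF : ∀ j, (F j).PosSemidef)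
    (hA : ∀ i j, A i j = trace (E i * (F j)ᵀ)) :
    ∃ (L₁ : ι → Matrix m (m × ι) 𝕜) (L₂ : ι → Matrix n (n × ι) 𝕜),
      (∑ k, L₁ k ⊗ₖ L₂ k) * (∑ k, L₁ k ⊗ₖ L₂ k)ᴴ = diagonal fun p => A p.1 p.2 := by
  choose P hP using fun i => (hE i).exists_eq_mul_conjTranspose
  choose Q hQ using fun j => (hF j).exists_eq_mul_conjTranspose
  refine ⟨blockSpread P, blockSpread Q, ?_⟩
  ext ⟨i, j⟩ ⟨i', j'⟩
  by_cases h : (i, j) = (i', j')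
  · obtain ⟨rfl, rfl⟩ := Prod.ext_iff.mp h
    rw [sum_kronecker_mul_conjTranspose_apply_self, rowStack_blockSpread_mul_conjTranspose,
      rowStack_blockSpread_mul_conjTranspose, ← hP, ← hQ, diagonal_apply_eq, hA]
  · rw [diagonal_apply_ne _ h]
    exact mul_conjTranspose_apply_eq_zero_of_ne _ (fun y => (y.1.1, y.2.1))
      (fun _ _ => sum_kronecker_blockSpread_apply_eq_zero P Q) h

end Matrix

theorem puriRank_sigmaM_eq_psdRank_general {d₁ d₂ : ℕ} (M : Matrix (Fin d₁) (Fin d₂) ℝ) :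
    sInf {r : ℕ | ∃ (d₁' d₂' : ℕ) (L₁ : Fin r → Matrix (Fin d₁) (Fin d₁') ℂ)
        (L₂ : Fin r → Matrix (Fin d₂) (Fin d₂') ℂ),
        (∑ k, L₁ k ⊗ₖ L₂ k) * (∑ k, L₁ k ⊗ₖ L₂ k)ᴴ = sigmaM M} =
    sInf {r : ℕ | ∃ (E : Fin d₁ → Matrix (Fin r) (Fin r) ℂ)
        (F : Fin d₂ → Matrix (Fin r) (Fin r) ℂ),
        (∀ i, (E i).PosSemidef) ∧ (∀ j, (F j).PosSemidef) ∧
        ∀ i j, (M i j : ℂ) = Matrix.trace (E i * (F j)ᵀ)} := by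
  congr 1
  ext r
  constructor
  · rintro ⟨d₁', d₂', L₁, L₂, hL⟩
    exact exists_psdFactorization_of_purification L₁ L₂ hL
  · rintro ⟨E, F, hE, hF, hEF⟩
    obtain ⟨L₁, L₂, hL⟩ := exists_purification_of_psdFactorization hE hF hEF
    obtain ⟨L₁', L₂', hL'⟩ := exists_fin_sum_kronecker_mul_conjTranspose_eq L₁ L₂
    exact ⟨_, _, L₁', L₂', hL'.trans hL⟩

/-- The purification rank of `σ(M)` equals the complex psd rank of `M`. -/
theorem puriRank_sigmaM_eq_psdRank {d₁ d₂ : ℕ} (M : Matrix (Fin d₁) (Fin d₂) ℝ)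
    (hM : ∀ i j, 0 ≤ M i j) :
    sInf {r : ℕ | ∃ (d₁' d₂' : ℕ) (L₁ : Fin r → Matrix (Fin d₁) (Fin d₁') ℂ)
        (L₂ : Fin r → Matrix (Fin d₂) (Fin d₂') ℂ),
        (∑ k, L₁ k ⊗ₖ L₂ k) * (∑ k, L₁ k ⊗ₖ L₂ k)ᴴ = sigmaM M} =
    sInf {r : ℕ | ∃ (E : Fin d₁ → Matrix (Fin r) (Fin r) ℂ)
        (F : Fin d₂ → Matrix (Fin r) (Fin r) ℂ),
        (∀ i, (E i).PosSemidef) ∧ (∀ j, (F j).PosSemidef) ∧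
        ∀ i j, (M i j : ℂ) = Matrix.trace (E i * (F j)ᵀ)} :=
  puriRank_sigmaM_eq_psdRank_general M
end

section
/- Every symmetric entrywise nonnegative real matrix admits a complex completely positive semidefinite transposed (cpsdt) factorisation: if M : Matrix (Fin d) (Fin d) ℝ satisfies M = Mᵀ and 0 ≤ M i j for all i, j, then there exist r ∈ ℕ and positive semidefinite matrices E i : Matrix (Fin r) (Fin r) ℂ (i : Fin d) such that (M i j : ℂ) = Matrix.trace (E i * (E j)ᵀ) for all i, j. -/
/-!
Since `tr (X * Yᵀ) = ∑ u v, X u v * Y u v` is bilinear rather than sesquilinear, a psd matrix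
can be orthogonal to itself: the projection `P` onto the isotropic line `ℂ • (1, -i)` satisfies
`tr (P * Pᵀ) = 0` and `tr (P * P) = 1`. Hence `E i = x i • P + y i • Pᵀ` with `x, y ≥ 0`
factorises `x yᵀ + y xᵀ`. A symmetric nonnegative `M` is the sum over `a` of such matrices with
`x = eₐ / 2` and `y` the `a`-th row of `M`, and block diagonal matrices add factorisations.
-/

open Matrix
open scoped ComplexOrder

open scoped MatrixOrder in
theorem Matrix.posSemidef_blockDiagonal {𝕜 m o : Type*} [RCLike 𝕜] [Fintype m] [DecidableEq m]
    [Fintype o] [DecidableEq o] {A : o → Matrix m m 𝕜} (hA : ∀ k, (A k).PosSemidef) :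
    (blockDiagonal A).PosSemidef := by
  choose B hB using fun k => CStarAlgebra.nonneg_iff_eq_star_mul_self.mp (hA k).nonneg
  rw [show A = fun k => (B k)ᴴ * B k from funext hB, blockDiagonal_mul,
    ← blockDiagonal_conjTranspose]
  exact posSemidef_conjTranspose_mul_self _

theorem Matrix.IsSymm.sum_vecMulVec_single_add {ι : Type*} [Fintype ι] [DecidableEq ι]
    {M : Matrix ι ι ℝ} (hM : M.IsSymm) :
    ∑ a, (vecMulVec (Pi.single a (1 / 2)) (M a) + vecMulVec (M a) (Pi.single a (1 / 2))) = M := by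
  ext i j
  simp only [Matrix.sum_apply, Matrix.add_apply, vecMulVec_apply, Pi.single_apply, ite_mul,
    zero_mul, mul_ite, mul_zero, Finset.sum_add_distrib, Finset.sum_ite_eq, Finset.mem_univ,
    if_true, hM.apply j i]
  ring

def IsCpsdtFactorisation {ι κ : Type*} [Fintype κ] (M : Matrix ι ι ℝ)
    (E : ι → Matrix κ κ ℂ) : Prop :=
  (∀ i, (E i).PosSemidef) ∧ ∀ i j, (M i j : ℂ) = trace (E i * (E j)ᵀ)

namespace IsCpsdtFactorisation

variable {ι κ : Type*} [Fintype κ]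

theorem reindex {κ' : Type*} [Fintype κ'] {M : Matrix ι ι ℝ} {E : ι → Matrix κ κ ℂ}
    (h : IsCpsdtFactorisation M E) (e : κ ≃ κ') :
    IsCpsdtFactorisation M fun i => Matrix.reindex e e (E i) := by
  refine ⟨fun i => (posSemidef_submatrix_equiv _).mpr (h.1 i), fun i j => ?_⟩
  simp only [h.2, reindex_apply]
  rw [transpose_submatrix, submatrix_mul_equiv]
  exact (e.symm.sum_comp fun k => (E i * (E j)ᵀ) k k).symm

theorem sum {P : Type*} [Fintype P] [DecidableEq P] [DecidableEq κ] {M : P → Matrix ι ι ℝ}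
    {E : P → ι → Matrix κ κ ℂ} (h : ∀ p, IsCpsdtFactorisation (M p) (E p)) :
    IsCpsdtFactorisation (∑ p, M p) fun i => blockDiagonal fun p => E p i := by
  refine ⟨fun i => posSemidef_blockDiagonal fun p => (h p).1 i, fun i j => ?_⟩
  rw [blockDiagonal_transpose, ← blockDiagonal_mul, trace_blockDiagonal, Matrix.sum_apply,
    Complex.ofReal_sum]
  exact Finset.sum_congr rfl fun p _ => (h p).2 i j

end IsCpsdtFactorisation

noncomputable def isotropicProjection : Matrix (Fin 2) (Fin 2) ℂ :=
  !![1 / 2, Complex.I / 2; -Complex.I / 2, 1 / 2]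

theorem isotropicProjection_eq_smul_vecMulVec :
    isotropicProjection = (1 / 2 : ℂ) • vecMulVec ![1, -Complex.I] (star ![1, -Complex.I]) := by
  ext u v
  rw [Matrix.smul_apply, vecMulVec_apply]
  fin_cases u <;> fin_cases v <;> simp [isotropicProjection, div_eq_inv_mul]

theorem posSemidef_isotropicProjection : isotropicProjection.PosSemidef := by
  rw [isotropicProjection_eq_smul_vecMulVec]
  exact (posSemidef_vecMulVec_self_star _).smul (by positivity)

theorem trace_isotropicProjection_mul_transpose :
    trace (isotropicProjection * isotropicProjectionᵀ) = 0 := by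
  simp only [trace, diag, mul_apply, transpose_apply, Fin.sum_univ_two, isotropicProjection,
    of_apply, cons_val', cons_val_zero, cons_val_fin_one, cons_val_one]
  linear_combination (1 / 2 : ℂ) * Complex.I_sq

theorem trace_isotropicProjection_mul_self :
    trace (isotropicProjection * isotropicProjection) = 1 := by
  simp only [trace, diag, mul_apply, Fin.sum_univ_two, isotropicProjection, of_apply, cons_val',
    cons_val_zero, cons_val_fin_one, cons_val_one]
  linear_combination (-1 / 2 : ℂ) * Complex.I_sq

theorem isCpsdtFactorisation_vecMulVec_add_vecMulVec {ι : Type*} {x y : ι → ℝ}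
    (hx : 0 ≤ x) (hy : 0 ≤ y) :
    IsCpsdtFactorisation (vecMulVec x y + vecMulVec y x) fun i =>
      (x i : ℂ) • isotropicProjection + (y i : ℂ) • isotropicProjectionᵀ := by
  have hP := posSemidef_isotropicProjection
  refine ⟨fun i => (hP.smul (Complex.zero_le_real.mpr (hx i))).add
    (hP.transpose.smul (Complex.zero_le_real.mpr (hy i))), fun i j => ?_⟩
  have hPP := trace_isotropicProjection_mul_self
  have hPPt := trace_isotropicProjection_mul_transpose
  have hPtP : trace (isotropicProjectionᵀ * isotropicProjection) = 0 := by
    rw [trace_mul_comm, hPPt]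
  have hPtPt : trace (isotropicProjectionᵀ * isotropicProjectionᵀ) = 1 := by
    rw [← transpose_mul, trace_transpose, hPP]
  simp only [transpose_add, transpose_smul, transpose_transpose, add_mul, mul_add,
    smul_mul_smul_comm, trace_add, trace_smul, hPP, hPPt, hPtP, hPtPt, Matrix.add_apply,
    vecMulVec_apply, smul_eq_mul]
  push_cast
  ring

/-- Every symmetric entrywise nonnegative real matrix admits a complex cpsdt factorisation. -/
theorem exists_cpsdt_factorisation {d : ℕ} (M : Matrix (Fin d) (Fin d) ℝ)
    (hsymm : M = Mᵀ) (hM : ∀ i j, 0 ≤ M i j) :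
    ∃ (r : ℕ) (E : Fin d → Matrix (Fin r) (Fin r) ℂ),
      (∀ i, (E i).PosSemidef) ∧
      ∀ i j, (M i j : ℂ) = Matrix.trace (E i * (E j)ᵀ) := by
  have hpieces (a : Fin d) := isCpsdtFactorisation_vecMulVec_add_vecMulVec
    (Pi.single_nonneg.mpr (by norm_num) : 0 ≤ Pi.single a (1 / 2 : ℝ)) (hM a)
  have hfac := IsCpsdtFactorisation.sum hpieces
  rw [IsSymm.sum_vecMulVec_single_add hsymm.symm] at hfac
  exact ⟨_, _, hfac.reindex (Fintype.equivFin _)⟩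
end

section
/- There exist d ∈ ℕ and a positive semidefinite, swap-invariant matrix ρ : Matrix (Fin d × Fin d) (Fin d × Fin d) ℂ (i.e. ρ (i₁,i₂) (j₁,j₂) = ρ (i₂,i₁) (j₂,j₁) for all indices) which is separable — there exist r and positive semidefinite A k, B k : Matrix (Fin d) (Fin d) ℂ (k < r) with ρ = Σ_{k<r} A k ⊗ₖ B k — but which admits no symmetric separable decomposition: there is no s ∈ ℕ and no family of positive semidefinite χ k : Matrix (Fin d) (Fin d) ℂ (k < s) with ρ = Σ_{k<s} χ k ⊗ₖ χ k. -/
open Matrix Kronecker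
open scoped BigOperators ComplexOrder

/-!
Take `ρ = ∑_{i ≠ j} |i j⟩⟨i j|`, the diagonal projector onto the basis vectors `|i j⟩` with
`i ≠ j`. It is swap-invariant and separable, being `∑ i, |i⟩⟨i| ⊗ (1 - |i⟩⟨i|)`. In a symmetric
decomposition `ρ = ∑ k, χ k ⊗ χ k` the entry `ρ (a,a) (a,a) = ∑ k, (χ k a a)²` is a sum of
nonnegative terms, so its vanishing forces `χ k a a = 0` for all `k`; but then
`ρ (a,b) (a,b) = ∑ k, χ k a a * χ k b b` vanishes as well, although it equals `1` for `a ≠ b`.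
-/

namespace Matrix

variable {𝕜 ι n : Type*} [RCLike 𝕜] [Fintype ι]

theorem sum_kronecker_self_apply_eq_zero_of_apply_diag_eq_zero {χ : ι → Matrix n n 𝕜}
    (hχ : ∀ k, (χ k).PosSemidef) {a : n} (ha : (∑ k, χ k ⊗ₖ χ k) (a, a) (a, a) = 0) (b : n) :
    (∑ k, χ k ⊗ₖ χ k) (a, b) (a, b) = 0 := by
  simp only [sum_apply, kroneckerMap_apply] at ha ⊢
  have hχa : ∀ k, χ k a a = 0 := fun k =>
    mul_self_eq_zero.mp <| (Finset.sum_eq_zero_iff_of_nonneg fun k _ =>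
      mul_nonneg (hχ k).diag_nonneg (hχ k).diag_nonneg).mp ha k (Finset.mem_univ k)
  simp [hχa]

variable (𝕜 n) [DecidableEq n]

def offDiagonalProjector : Matrix (n × n) (n × n) 𝕜 :=
  diagonal fun p => if p.1 = p.2 then 0 else 1

theorem posSemidef_offDiagonalProjector : (offDiagonalProjector 𝕜 n).PosSemidef :=
  PosSemidef.diagonal fun p => by dsimp only; split_ifs <;> simp

theorem offDiagonalProjector_apply_swap (i₁ i₂ j₁ j₂ : n) :
    offDiagonalProjector 𝕜 n (i₁, i₂) (j₁, j₂) = offDiagonalProjector 𝕜 n (i₂, i₁) (j₂, j₁) := by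
  simp only [offDiagonalProjector, diagonal_apply, Prod.mk.injEq, eq_comm (a := i₂)]
  grind

theorem offDiagonalProjector_eq_sum_kronecker [Fintype n] :
    offDiagonalProjector 𝕜 n =
      ∑ i, diagonal (Pi.single i 1) ⊗ₖ diagonal fun j => if j = i then 0 else 1 := by
  ext ⟨a, b⟩ ⟨c, d⟩
  simp only [offDiagonalProjector, diagonal_kronecker_diagonal, sum_apply, diagonal_apply]
  rcases eq_or_ne (a, b) (c, d) with h | h
  · cases h
    rw [Fintype.sum_eq_single a fun i hi => by simp [hi.symm]]
    simp [eq_comm]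
  · simp [h]

theorem offDiagonalProjector_ne_sum_kronecker_self [Nontrivial n] {χ : ι → Matrix n n 𝕜}
    (hχ : ∀ k, (χ k).PosSemidef) : offDiagonalProjector 𝕜 n ≠ ∑ k, χ k ⊗ₖ χ k := by
  intro h
  obtain ⟨a, b, hab⟩ := exists_pair_ne n
  have hdiag : (∑ k, χ k ⊗ₖ χ k) (a, a) (a, a) = 0 := by simp [← h, offDiagonalProjector]
  have := sum_kronecker_self_apply_eq_zero_of_apply_diag_eq_zero hχ hdiag b
  simp [← h, offDiagonalProjector, hab] at this

end Matrix

/-- There is a separable, swap-invariant psd bipartite matrix admitting no symmetric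
separable decomposition. -/
theorem exists_separable_swapInvariant_without_symmetric_separable_decomposition :
    ∃ (d : ℕ) (ρ : Matrix (Fin d × Fin d) (Fin d × Fin d) ℂ),
      ρ.PosSemidef ∧
      (∀ i₁ i₂ j₁ j₂ : Fin d, ρ (i₁, i₂) (j₁, j₂) = ρ (i₂, i₁) (j₂, j₁)) ∧
      (∃ (r : ℕ) (A : Fin r → Matrix (Fin d) (Fin d) ℂ)
        (B : Fin r → Matrix (Fin d) (Fin d) ℂ),
        (∀ k, (A k).PosSemidef) ∧ (∀ k, (B k).PosSemidef) ∧ ρ = ∑ k, A k ⊗ₖ B k) ∧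
      ¬∃ (s : ℕ) (χ : Fin s → Matrix (Fin d) (Fin d) ℂ),
        (∀ k, (χ k).PosSemidef) ∧ ρ = ∑ k, χ k ⊗ₖ χ k := by
  refine ⟨2, offDiagonalProjector ℂ (Fin 2), posSemidef_offDiagonalProjector ℂ _,
    offDiagonalProjector_apply_swap ℂ _, ⟨2, _, _, fun _ => ?_, fun _ => ?_,
    offDiagonalProjector_eq_sum_kronecker ℂ _⟩, ?_⟩
  · exact PosSemidef.diagonal fun j => by simp only [Pi.single_apply]; split_ifs <;> simp
  · exact PosSemidef.diagonal fun j => by dsimp only; split_ifs <;> simp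
  · rintro ⟨s, χ, hχ, h⟩
    exact offDiagonalProjector_ne_sum_kronecker_self ℂ (Fin 2) hχ h
end

section
/- Let n, d ∈ ℕ and let ρ : Matrix (Fin n → Fin d) (Fin n → Fin d) ℂ be positive semidefinite. Then the following are equivalent: (1) ρ is a product operator, i.e. there exists A : Fin n → Matrix (Fin d) (Fin d) ℂ with ρ i j = ∏_{l : Fin n} A l (i l) (j l) for all i, j; (2) ρ is a product of positive semidefinite operators, i.e. there exists such an A with every A l positive semidefinite; (3) ρ admits a product purification, i.e. there exist d' : Fin n → ℕ and C : (l : Fin n) → Matrix (Fin d) (Fin (d' l)) ℂ with ρ i j = ∏_{l : Fin n} (C l * (C l)ᴴ) (i l) (j l) for all i, j. (Equivalently: osr(ρ) = 1 ↔ sep-rank(ρ) = 1 ↔ puri-rank(ρ) = 1.) -/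
open Matrix
open scoped BigOperators ComplexOrder

/-!
Suppose `ρ = ⊗ₗ Aₗ` is psd. If `ρ` vanishes on the diagonal it is zero, and so is a product of
zero factors. Otherwise pick `i₀` with `c := ρ i₀ i₀ ≠ 0`. Moving only the `l`-th coordinate of
`i₀` cuts out a principal submatrix of `ρ`, hence a psd matrix, and it equals
`(c / Aₗ(i₀ₗ, i₀ₗ)) • Aₗ`. So the normalised factors `Aₗ(i₀ₗ, i₀ₗ)⁻¹ • Aₗ` are psd, their
product is `c⁻¹ • ρ`, and multiplying one of them by `c > 0` recovers `ρ`.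
A psd factor is `C * Cᴴ` for some square `C`, which gives the product purification.
-/

namespace Matrix

variable {ι α R 𝕜 : Type*} [Fintype ι]

def piKronecker [CommMonoid R] (A : ι → Matrix α α R) : Matrix (ι → α) (ι → α) R :=
  of fun i j => ∏ l, A l (i l) (j l)

@[simp]
lemma piKronecker_apply [CommMonoid R] (A : ι → Matrix α α R) (i j : ι → α) :
    piKronecker A i j = ∏ l, A l (i l) (j l) :=
  rfl

lemma piKronecker_smul [CommMonoid R] (c : ι → R) (A : ι → Matrix α α R) :
    piKronecker (fun l => c l • A l) = (∏ l, c l) • piKronecker A := by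
  ext i j
  simp [Finset.prod_mul_distrib]

lemma piKronecker_update_smul [CommMonoid R] [DecidableEq ι] (A : ι → Matrix α α R) (l : ι)
    (c : R) : piKronecker (Function.update A l (c • A l)) = c • piKronecker A := by
  ext i j
  rw [smul_apply, piKronecker_apply, piKronecker_apply, Fintype.prod_eq_mul_prod_compl l,
    Fintype.prod_eq_mul_prod_compl l, smul_eq_mul, ← mul_assoc]
  congr 1
  · simp
  · refine Finset.prod_congr rfl fun m hm => ?_
    rw [Function.update_of_ne (by simpa using hm)]

lemma submatrix_update_piKronecker [CommMonoid R] [DecidableEq ι] (A : ι → Matrix α α R)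
    (i₀ : ι → α) (l : ι) :
    (piKronecker A).submatrix (Function.update i₀ l) (Function.update i₀ l) =
      (∏ m ∈ {l}ᶜ, A m (i₀ m) (i₀ m)) • A l := by
  ext a b
  rw [submatrix_apply, piKronecker_apply, Fintype.prod_eq_mul_prod_compl l, smul_apply,
    smul_eq_mul, mul_comm]
  simp only [Function.update_self]
  congr 1
  refine Finset.prod_congr rfl fun m hm => ?_
  rw [Function.update_of_ne (by simpa using hm), Function.update_of_ne (by simpa using hm)]


variable [RCLike 𝕜] [DecidableEq ι] {A : ι → Matrix α α 𝕜}

lemma PosSemidef.inv_diag_smul_of_piKronecker (hA : (piKronecker A).PosSemidef) {i₀ : ι → α}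
    (hi₀ : piKronecker A i₀ i₀ ≠ 0) (l : ι) : ((A l (i₀ l) (i₀ l))⁻¹ • A l).PosSemidef := by
  have hprod : (∏ m ∈ {l}ᶜ, A m (i₀ m) (i₀ m)) * A l (i₀ l) (i₀ l) = piKronecker A i₀ i₀ :=
    (Fintype.prod_eq_prod_compl_mul l _).symm
  have hcompl : ∏ m ∈ {l}ᶜ, A m (i₀ m) (i₀ m) ≠ 0 := left_ne_zero_of_mul (hprod ▸ hi₀)
  have hslice : (A l (i₀ l) (i₀ l))⁻¹ • A l = (piKronecker A i₀ i₀)⁻¹ •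
      (piKronecker A).submatrix (Function.update i₀ l) (Function.update i₀ l) := by
    rw [submatrix_update_piKronecker, smul_smul, ← hprod]
    congr 1
    field_simp
  rw [hslice]
  exact (hA.submatrix _).smul (inv_nonneg.mpr hA.diag_nonneg)

theorem exists_posSemidef_piKronecker_eq [Fintype α] (hA : (piKronecker A).PosSemidef) :
    ∃ B : ι → Matrix α α 𝕜, (∀ l, (B l).PosSemidef) ∧ piKronecker B = piKronecker A := by
  cases isEmpty_or_nonempty ι with
  | inl _ => exact ⟨A, isEmptyElim, rfl⟩
  | inr hι =>
  obtain ⟨l₀⟩ := hι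
  by_cases hzero : ∀ i, piKronecker A i i = 0
  · refine ⟨0, fun _ => .zero, ?_⟩
    rw [hA.trace_eq_zero_iff.mp (Finset.sum_eq_zero fun i _ => hzero i)]
    ext i j
    exact Finset.prod_eq_zero (Finset.mem_univ l₀) rfl
  push Not at hzero
  obtain ⟨i₀, hi₀⟩ := hzero
  set c := piKronecker A i₀ i₀
  set B : ι → Matrix α α 𝕜 := fun l => (A l (i₀ l) (i₀ l))⁻¹ • A l
  have hB : piKronecker B = c⁻¹ • piKronecker A := by
    rw [piKronecker_smul, Finset.prod_inv_distrib]
    rfl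
  refine ⟨Function.update B l₀ (c • B l₀), fun l => ?_, ?_⟩
  · rcases eq_or_ne l l₀ with rfl | hl
    · rw [Function.update_self]
      exact (hA.inv_diag_smul_of_piKronecker hi₀ l).smul hA.diag_nonneg
    · rw [Function.update_of_ne hl]
      exact hA.inv_diag_smul_of_piKronecker hi₀ l
  · rw [piKronecker_update_smul, hB, smul_inv_smul₀ hi₀]

open scoped MatrixOrder in
lemma PosSemidef.exists_eq_mul_conjTranspose_s15 {n : Type*} [Fintype n] [DecidableEq n]
    {M : Matrix n n 𝕜} (hM : M.PosSemidef) : ∃ C : Matrix n n 𝕜, M = C * Cᴴ :=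
  CStarAlgebra.nonneg_iff_eq_mul_star_self.mp hM.nonneg

end Matrix

/-- Characterisation of product psd matrices: a psd matrix is a product operator iff it is a
product of psd operators iff it admits a product purification. -/
theorem product_psd_characterisation {n d : ℕ}
    (ρ : Matrix (Fin n → Fin d) (Fin n → Fin d) ℂ) (hρ : ρ.PosSemidef) :
    ((∃ A : Fin n → Matrix (Fin d) (Fin d) ℂ,
        ∀ i j, ρ i j = ∏ l : Fin n, A l (i l) (j l)) ↔
      (∃ A : Fin n → Matrix (Fin d) (Fin d) ℂ,
        (∀ l, (A l).PosSemidef) ∧ ∀ i j, ρ i j = ∏ l : Fin n, A l (i l) (j l)))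
    ∧
    ((∃ A : Fin n → Matrix (Fin d) (Fin d) ℂ,
        ∀ i j, ρ i j = ∏ l : Fin n, A l (i l) (j l)) ↔
      (∃ (d' : Fin n → ℕ) (C : (l : Fin n) → Matrix (Fin d) (Fin (d' l)) ℂ),
        ∀ i j, ρ i j = ∏ l : Fin n, (C l * (C l)ᴴ) (i l) (j l))) := by
  have psd_factors :
      (∃ A : Fin n → Matrix (Fin d) (Fin d) ℂ, ∀ i j, ρ i j = ∏ l, A l (i l) (j l)) →
      ∃ A : Fin n → Matrix (Fin d) (Fin d) ℂ,
        (∀ l, (A l).PosSemidef) ∧ ∀ i j, ρ i j = ∏ l : Fin n, A l (i l) (j l) := by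
    rintro ⟨A, hA⟩
    obtain rfl : ρ = piKronecker A := Matrix.ext hA
    obtain ⟨B, hB, hBA⟩ := exists_posSemidef_piKronecker_eq hρ
    exact ⟨B, hB, fun i j => by rw [← hBA]; rfl⟩
  refine ⟨⟨psd_factors, fun ⟨A, _, hA⟩ => ⟨A, hA⟩⟩, ⟨fun h => ?_, fun ⟨_, C, hC⟩ => ⟨_, hC⟩⟩⟩
  obtain ⟨A, hA, hρA⟩ := psd_factors h
  choose C hC using fun l => (hA l).exists_eq_mul_conjTranspose_s15
  exact ⟨fun _ => d, C, fun i j => by simp only [hρA, ← hC]⟩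
end

section
/- Let ρ : Matrix (Fin d₁ × Fin d₂) (Fin d₁ × Fin d₂) ℂ be positive semidefinite. Then osr(ρ) ≤ puri-rank(ρ)². Equivalently, if there exist d₁', d₂' ∈ ℕ and matrices L¹ k : Matrix (Fin d₁) (Fin d₁') ℂ, L² k : Matrix (Fin d₂) (Fin d₂') ℂ (k < r) such that L = Σ_{k<r} L¹ k ⊗ₖ L² k satisfies L * Lᴴ = ρ, then there exist A m : Matrix (Fin d₁) (Fin d₁) ℂ and B m : Matrix (Fin d₂) (Fin d₂) ℂ (m < r²) with ρ = Σ_{m<r²} A m ⊗ₖ B m. -/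
open Matrix Kronecker
open scoped BigOperators ComplexOrder

/-- Operator Schmidt rank of a bipartite matrix. -/
noncomputable def osr {d₁ d₂ : ℕ} (ρ : Matrix (Fin d₁ × Fin d₂) (Fin d₁ × Fin d₂) ℂ) : ℕ :=
  sInf {r : ℕ | ∃ (A : Fin r → Matrix (Fin d₁) (Fin d₁) ℂ)
      (B : Fin r → Matrix (Fin d₂) (Fin d₂) ℂ),
      ρ = ∑ k, A k ⊗ₖ B k}

/-!
If `L = ∑ₖ L¹ₖ ⊗ L²ₖ`, then `L Lᴴ = ∑_{k,l} (L¹ₖ L¹ₗᴴ) ⊗ (L²ₖ L²ₗᴴ)` has `r²` Kronecker terms.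
The inequality of ranks also needs a purification to exist (else `puriRank ρ = sInf ∅ = 0`):
a positive semidefinite `ρ` is `S Sᴴ`, and every matrix on a product index is a finite sum of
Kronecker products.
-/

section Kronecker

variable {R ι l m n p : Type*} [Fintype ι]

theorem sum_kronecker_mul_conjTranspose [CommSemiring R] [StarRing R] [Fintype m] [Fintype p]
    (A : ι → Matrix l m R) (B : ι → Matrix n p R) :
    (∑ k, A k ⊗ₖ B k) * (∑ k, A k ⊗ₖ B k)ᴴ =
      ∑ kl : ι × ι, (A kl.1 * (A kl.2)ᴴ) ⊗ₖ (B kl.1 * (B kl.2)ᴴ) := by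
  simp only [conjTranspose_sum, Matrix.sum_mul, Matrix.mul_sum, conjTranspose_kronecker,
    ← mul_kronecker_mul, Fintype.sum_prod_type]
  exact Finset.sum_comm

theorem eq_sum_single_kronecker [Semiring R] [Fintype l] [Fintype m] [DecidableEq l]
    [DecidableEq m] (M : Matrix (l × n) (m × p) R) :
    M = ∑ ij : l × m, single ij.1 ij.2 (1 : R) ⊗ₖ of fun a b => M (ij.1, a) (ij.2, b) := by
  ext ⟨i, a⟩ ⟨j, b⟩
  simp [Matrix.sum_apply, kroneckerMap_apply, single_apply, Fintype.sum_prod_type, ite_and]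

end Kronecker

theorem exists_sum_kronecker_mul_conjTranspose_eq {d₁ d₂ : ℕ}
    {ρ : Matrix (Fin d₁ × Fin d₂) (Fin d₁ × Fin d₂) ℂ} (hρ : ρ.PosSemidef) :
    ∃ (r d₁' d₂' : ℕ) (L₁ : Fin r → Matrix (Fin d₁) (Fin d₁') ℂ)
      (L₂ : Fin r → Matrix (Fin d₂) (Fin d₂') ℂ),
      (∑ k, L₁ k ⊗ₖ L₂ k) * (∑ k, L₁ k ⊗ₖ L₂ k)ᴴ = ρ := by
  obtain ⟨S, hS⟩ : ∃ S : Matrix (Fin d₁ × Fin d₂) (Fin d₁ × Fin d₂) ℂ, ρ = star S * S := by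
    open scoped MatrixOrder Matrix.Norms.L2Operator in
    exact CStarAlgebra.nonneg_iff_eq_star_mul_self.mp hρ.nonneg
  let e := Fintype.equivFin (Fin d₁ × Fin d₁)
  refine ⟨_, d₁, d₂, fun k => single (e.symm k).1 (e.symm k).2 1,
    fun k => of fun a b => Sᴴ ((e.symm k).1, a) ((e.symm k).2, b), ?_⟩
  rw [e.symm.sum_comp (fun ij => single ij.1 ij.2 (1 : ℂ) ⊗ₖ of fun a b => Sᴴ (ij.1, a) (ij.2, b)),
    ← eq_sum_single_kronecker, conjTranspose_conjTranspose, hS, star_eq_conjTranspose]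

theorem exists_sum_kronecker_of_sum_kronecker_mul_conjTranspose_eq {d₁ d₂ d₁' d₂' r : ℕ}
    {ρ : Matrix (Fin d₁ × Fin d₂) (Fin d₁ × Fin d₂) ℂ} (L₁ : Fin r → Matrix (Fin d₁) (Fin d₁') ℂ)
    (L₂ : Fin r → Matrix (Fin d₂) (Fin d₂') ℂ)
    (hL : (∑ k, L₁ k ⊗ₖ L₂ k) * (∑ k, L₁ k ⊗ₖ L₂ k)ᴴ = ρ) :
    ∃ (A : Fin (r ^ 2) → Matrix (Fin d₁) (Fin d₁) ℂ)
      (B : Fin (r ^ 2) → Matrix (Fin d₂) (Fin d₂) ℂ), ρ = ∑ m, A m ⊗ₖ B m := by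
  let e : Fin (r ^ 2) ≃ Fin r × Fin r := (finCongr (sq r)).trans finProdFinEquiv.symm
  refine ⟨fun m => L₁ (e m).1 * (L₁ (e m).2)ᴴ, fun m => L₂ (e m).1 * (L₂ (e m).2)ᴴ, ?_⟩
  rw [← hL, sum_kronecker_mul_conjTranspose,
    e.sum_comp fun kl => (L₁ kl.1 * (L₁ kl.2)ᴴ) ⊗ₖ (L₂ kl.1 * (L₂ kl.2)ᴴ)]

/-- `osr ρ ≤ puri-rank ρ ^ 2`, for positive semidefinite `ρ`; explicitly, any purification with
`r` Kronecker terms yields an operator Schmidt decomposition with `r²` terms. -/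
theorem osr_le_puriRank_sq {d₁ d₂ : ℕ}
    (ρ : Matrix (Fin d₁ × Fin d₂) (Fin d₁ × Fin d₂) ℂ) (hρ : ρ.PosSemidef) :
    osr ρ ≤ puriRank ρ ^ 2 ∧
    ∀ (r d₁' d₂' : ℕ) (L₁ : Fin r → Matrix (Fin d₁) (Fin d₁') ℂ)
      (L₂ : Fin r → Matrix (Fin d₂) (Fin d₂') ℂ),
      (∑ k, L₁ k ⊗ₖ L₂ k) * (∑ k, L₁ k ⊗ₖ L₂ k)ᴴ = ρ →
      ∃ (A : Fin (r ^ 2) → Matrix (Fin d₁) (Fin d₁) ℂ)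
        (B : Fin (r ^ 2) → Matrix (Fin d₂) (Fin d₂) ℂ),
        ρ = ∑ m, A m ⊗ₖ B m := by
  refine ⟨?_, fun _ _ _ L₁ L₂ hL =>
    exists_sum_kronecker_of_sum_kronecker_mul_conjTranspose_eq L₁ L₂ hL⟩
  obtain ⟨d₁', d₂', L₁, L₂, hL⟩ := Nat.sInf_mem (exists_sum_kronecker_mul_conjTranspose_eq hρ)
  exact Nat.sInf_le (exists_sum_kronecker_of_sum_kronecker_mul_conjTranspose_eq L₁ L₂ hL)
end
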